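/- For every j with 1 ≤ j ≤ N−2, the unitary U_d satisfies (⟨0|⊗⟨0|⊗⟨0|⊗I_N) U_d (|0⟩⊗|0⟩⊗|0⟩⊗e_j) = (1/4)(e_{j−1} − 2 e_j + e_{j+1}). -/

import Mathlib

open Matrix
open scoped Kronecker

noncomputable section

instance instNeZeroPow2 (n : ℕ) : NeZero (2 ^ n) := ⟨pow_ne_zero n two_ne_zero⟩

/-- Cyclic left shift: `Sm • e_j = e_{j-1 mod N}`, i.e. `(Sm)_{i j} = [i = j - 1]`. -/
def Sm (N : ℕ) [NeZero N] : Matrix (Fin N) (Fin N) ℂ :=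
  Matrix.of fun i j => if i = j - 1 then 1 else 0

/-- Cyclic right shift: `Sp • e_j = e_{j+1 mod N}`. -/
def Sp (N : ℕ) [NeZero N] : Matrix (Fin N) (Fin N) ℂ :=
  Matrix.of fun i j => if i = j + 1 then 1 else 0

/-- The index `N - 1` of the last grid point. -/
def fLast (N : ℕ) [NeZero N] : Fin N := ⟨N - 1, Nat.sub_lt (Nat.pos_of_neZero N) Nat.one_pos⟩

def Hgate : Matrix (Fin 2) (Fin 2) ℂ := ((1 / Real.sqrt 2 : ℝ) : ℂ) • !![1, 1; 1, -1]
def Zgate : Matrix (Fin 2) (Fin 2) ℂ := !![1, 0; 0, -1]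
def Xgate : Matrix (Fin 2) (Fin 2) ℂ := !![0, 1; 1, 0]
def P0 : Matrix (Fin 2) (Fin 2) ℂ := !![1, 0; 0, 0]
def P1 : Matrix (Fin 2) (Fin 2) ℂ := !![0, 0; 0, 1]

/-- Controlled flip `F(Q) = X ⊗ Q + I₂ ⊗ (I − Q)` for a projector `Q`. -/
def Fctrl {α : Type*} [DecidableEq α] [Fintype α] (Q : Matrix α α ℂ) :
    Matrix (Fin 2 × α) (Fin 2 × α) ℂ :=
  Xgate ⊗ₖ Q + (1 : Matrix (Fin 2) (Fin 2) ℂ) ⊗ₖ ((1 : Matrix α α ℂ) - Q)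

/-- `C₋ = I₂ ⊗ (|0⟩⟨0| ⊗ I₂ ⊗ S⁻ + |1⟩⟨1| ⊗ I₂ ⊗ I_N)` on `del, ℓ₁, ℓ₀, j`. -/
def Cminus3 (N : ℕ) [NeZero N] :
    Matrix (Fin 2 × Fin 2 × Fin 2 × Fin N) (Fin 2 × Fin 2 × Fin 2 × Fin N) ℂ :=
  (1 : Matrix (Fin 2) (Fin 2) ℂ) ⊗ₖ
    (P0 ⊗ₖ ((1 : Matrix (Fin 2) (Fin 2) ℂ) ⊗ₖ Sm N) +
     P1 ⊗ₖ ((1 : Matrix (Fin 2) (Fin 2) ℂ) ⊗ₖ (1 : Matrix (Fin N) (Fin N) ℂ)))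

/-- `C₊ = I₂ ⊗ I₂ ⊗ (|1⟩⟨1| ⊗ S⁺ + |0⟩⟨0| ⊗ I_N)` on `del, ℓ₁, ℓ₀, j`. -/
def Cplus3 (N : ℕ) [NeZero N] :
    Matrix (Fin 2 × Fin 2 × Fin 2 × Fin N) (Fin 2 × Fin 2 × Fin 2 × Fin N) ℂ :=
  (1 : Matrix (Fin 2) (Fin 2) ℂ) ⊗ₖ ((1 : Matrix (Fin 2) (Fin 2) ℂ) ⊗ₖ
    (P1 ⊗ₖ Sp N + P0 ⊗ₖ (1 : Matrix (Fin N) (Fin N) ℂ)))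

/-- `B₀ = F(|0⟩⟨0| ⊗ |0⟩⟨0| ⊗ e₀e₀ᵀ)`. -/
def B00 (N : ℕ) [NeZero N] :
    Matrix (Fin 2 × Fin 2 × Fin 2 × Fin N) (Fin 2 × Fin 2 × Fin 2 × Fin N) ℂ :=
  Fctrl (P0 ⊗ₖ (P0 ⊗ₖ Matrix.single (0 : Fin N) (0 : Fin N) (1 : ℂ)))

/-- `B₂ = F(|0⟩⟨0| ⊗ |1⟩⟨1| ⊗ e₀e₀ᵀ)`. -/
def B01 (N : ℕ) [NeZero N] :
    Matrix (Fin 2 × Fin 2 × Fin 2 × Fin N) (Fin 2 × Fin 2 × Fin 2 × Fin N) ℂ :=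
  Fctrl (P0 ⊗ₖ (P1 ⊗ₖ Matrix.single (0 : Fin N) (0 : Fin N) (1 : ℂ)))

/-- `B_{N−1} = F(|1⟩⟨1| ⊗ |1⟩⟨1| ⊗ e_{N−1}e_{N−1}ᵀ)`. -/
def B11L (N : ℕ) [NeZero N] :
    Matrix (Fin 2 × Fin 2 × Fin 2 × Fin N) (Fin 2 × Fin 2 × Fin 2 × Fin N) ℂ :=
  Fctrl (P1 ⊗ₖ (P1 ⊗ₖ Matrix.single (fLast N) (fLast N) (1 : ℂ)))

/-- `B₄ = F(|0⟩⟨0| ⊗ |1⟩⟨1| ⊗ e_{N−1}e_{N−1}ᵀ)`. -/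
def B01L (N : ℕ) [NeZero N] :
    Matrix (Fin 2 × Fin 2 × Fin 2 × Fin N) (Fin 2 × Fin 2 × Fin 2 × Fin N) ℂ :=
  Fctrl (P0 ⊗ₖ (P1 ⊗ₖ Matrix.single (fLast N) (fLast N) (1 : ℂ)))

/-- `I₂ ⊗ A ⊗ A ⊗ I_N` for a single-qubit gate `A`. -/
def sandwich (N : ℕ) [NeZero N] (A : Matrix (Fin 2) (Fin 2) ℂ) :
    Matrix (Fin 2 × Fin 2 × Fin 2 × Fin N) (Fin 2 × Fin 2 × Fin 2 × Fin N) ℂ :=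
  (1 : Matrix (Fin 2) (Fin 2) ℂ) ⊗ₖ (A ⊗ₖ (A ⊗ₖ (1 : Matrix (Fin N) (Fin N) ℂ)))

/-- `U_d = (I₂⊗H⊗H⊗I) · C₊ · C₋ · B_{N−1} · B₀ · (I₂⊗Z⊗Z⊗I) · (I₂⊗H⊗H⊗I)`. -/
def Ud (N : ℕ) [NeZero N] :
    Matrix (Fin 2 × Fin 2 × Fin 2 × Fin N) (Fin 2 × Fin 2 × Fin 2 × Fin N) ℂ :=
  sandwich N Hgate * Cplus3 N * Cminus3 N * B11L N * B00 N * sandwich N Zgate * sandwich N Hgate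

/-- `U_n = (I₂⊗H⊗H⊗I) · C₊ · C₋ · B₄ · B₃ · B₂ · B₁ · (I₂⊗Z⊗Z⊗I) · (I₂⊗H⊗H⊗I)`. -/
def Un (N : ℕ) [NeZero N] :
    Matrix (Fin 2 × Fin 2 × Fin 2 × Fin N) (Fin 2 × Fin 2 × Fin 2 × Fin N) ℂ :=
  sandwich N Hgate * Cplus3 N * Cminus3 N * B01L N * B11L N * B01 N * B00 N *
    sandwich N Zgate * sandwich N Hgate

/-- The standard basis vector `e_i` of `ℂ^N`. -/
def eVec (N : ℕ) (i : Fin N) : Fin N → ℂ := Pi.single i 1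



/-!
On `|0⟩|0⟩|0⟩|e_j⟩` the gates `H⊗H` and then `Z⊗Z` produce `½ Σ_{a,b} (-1)^(a+b) |0⟩|a⟩|b⟩|e_j⟩`.
For an interior site `j` the boundary flips `B₀`, `B_{N−1}` act trivially, `C₋` moves the branches
with `ℓ₁ = 0` to `e_{j−1}` and `C₊` those with `ℓ₀ = 1` to `e_{j+1}`, leaving
`½ (|00⟩e_{j−1} − |01⟩e_j − |10⟩e_j + |11⟩e_{j+1})`. The final `H⊗H` followed by `⟨00|` sums
the four branches with weight `½`, giving `¼ (e_{j−1} − 2 e_j + e_{j+1})`.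
-/

section

def ket {N : ℕ} (d a b : Fin 2) (k : Fin N) : Fin 2 × Fin 2 × Fin 2 × Fin N → ℂ :=
  Pi.single (d, a, b, k) 1

lemma Fctrl_mulVec_single_of_col_eq_zero {α : Type*} [DecidableEq α] [Fintype α]
    (Q : Matrix α α ℂ) (d : Fin 2) (x : α) (hQ : ∀ y, Q y x = 0) :
    Fctrl Q *ᵥ Pi.single (d, x) 1 = Pi.single (d, x) 1 := by
  ext ⟨d', y⟩
  simp [Fctrl, hQ, Matrix.one_apply, Pi.single_apply, ite_and, and_comm]

variable {N : ℕ} [NeZero N]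

lemma sandwich_mulVec_ket (A : Matrix (Fin 2) (Fin 2) ℂ) (d a b : Fin 2) (k : Fin N) :
    sandwich N A *ᵥ ket d a b k = ∑ a', ∑ b', (A a' a * A b' b) • ket d a' b' k := by
  ext ⟨d', a', b', k'⟩
  fin_cases a' <;> fin_cases b' <;>
    simp [ket, sandwich, Matrix.one_apply, Finset.sum_apply, Pi.single_apply, ite_and] <;> grind

lemma B00_mulVec_ket (d a b : Fin 2) {k : Fin N} (hk : k ≠ 0) :
    B00 N *ᵥ ket d a b k = ket d a b k :=
  Fctrl_mulVec_single_of_col_eq_zero _ _ _ fun _ => by simp [Ne.symm hk]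

lemma B11L_mulVec_ket (d a b : Fin 2) {k : Fin N} (hk : k ≠ fLast N) :
    B11L N *ᵥ ket d a b k = ket d a b k :=
  Fctrl_mulVec_single_of_col_eq_zero _ _ _ fun _ => by simp [Ne.symm hk]

lemma Cminus3_mulVec_ket (d a b : Fin 2) (k : Fin N) :
    Cminus3 N *ᵥ ket d a b k = ket d a b (if a = 0 then k - 1 else k) := by
  ext ⟨d', a', b', k'⟩
  fin_cases a <;> fin_cases a' <;>
    simp [ket, Cminus3, P0, P1, Sm, Matrix.one_apply, Pi.single_apply, ite_and] <;>
    split_ifs <;> simp_all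

lemma Cplus3_mulVec_ket (d a b : Fin 2) (k : Fin N) :
    Cplus3 N *ᵥ ket d a b k = ket d a b (if b = 1 then k + 1 else k) := by
  ext ⟨d', a', b', k'⟩
  fin_cases b <;> fin_cases b' <;>
    simp [ket, Cplus3, P0, P1, Sp, Matrix.one_apply, Pi.single_apply, ite_and] <;>
    split_ifs <;> simp_all

lemma sqrt_two_inv_mul_self : ((√2 : ℝ) : ℂ)⁻¹ * ((√2 : ℝ) : ℂ)⁻¹ = 1 / 2 := by
  rw [← mul_inv, ← Complex.ofReal_mul, Real.mul_self_sqrt zero_le_two]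
  norm_num

lemma Hgate_apply_zero_mul (a b : Fin 2) : Hgate a 0 * Hgate b 0 = 1 / 2 := by
  fin_cases a <;> fin_cases b <;> simp [Hgate, sqrt_two_inv_mul_self]

lemma Hgate_zero_apply_mul (a b : Fin 2) : Hgate 0 a * Hgate 0 b = 1 / 2 := by
  fin_cases a <;> fin_cases b <;> simp [Hgate, sqrt_two_inv_mul_self]

def UdInner (N : ℕ) [NeZero N] :
    Matrix (Fin 2 × Fin 2 × Fin 2 × Fin N) (Fin 2 × Fin 2 × Fin 2 × Fin N) ℂ :=
  Cplus3 N * Cminus3 N * B11L N * B00 N * sandwich N Zgate * sandwich N Hgate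

lemma Ud_eq_sandwich_mul_UdInner : Ud N = sandwich N Hgate * UdInner N := by
  simp only [Ud, UdInner, Matrix.mul_assoc]

lemma UdInner_mulVec_ket {J : Fin N} (h0 : J ≠ 0) (hL : J ≠ fLast N) :
    UdInner N *ᵥ ket 0 0 0 J =
      (1 / 2 : ℂ) • (ket 0 0 0 (J - 1) - ket 0 0 1 J - ket 0 1 0 J + ket 0 1 1 (J + 1)) := by
  simp only [UdInner, ← mulVec_mulVec, sandwich_mulVec_ket, Fin.sum_univ_two,
    Hgate_apply_zero_mul, mulVec_add, mulVec_smul]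
  simp [Zgate, B00_mulVec_ket _ _ _ h0, B11L_mulVec_ket _ _ _ hL,
    Cminus3_mulVec_ket, Cplus3_mulVec_ket, sub_eq_add_neg, add_assoc]

lemma Ud_apply_interior {J : Fin N} (h0 : J ≠ 0) (hL : J ≠ fLast N) :
    (fun i => Ud N (0, 0, 0, i) (0, 0, 0, J)) =
      (1 / 4 : ℂ) • (eVec N (J - 1) - (2 : ℂ) • eVec N J + eVec N (J + 1)) := by
  ext i
  have hcol : Ud N (0, 0, 0, i) (0, 0, 0, J) = (Ud N *ᵥ ket 0 0 0 J) (0, 0, 0, i) := by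
    simp [ket]
  rw [hcol, Ud_eq_sandwich_mul_UdInner, ← mulVec_mulVec, UdInner_mulVec_ket h0 hL]
  simp only [mulVec_smul, mulVec_add, mulVec_sub, sandwich_mulVec_ket, Fin.sum_univ_two]
  simp only [Hgate_zero_apply_mul, ket, eVec, Pi.smul_apply, Pi.add_apply, Pi.sub_apply,
    Pi.single_apply, Prod.mk.injEq, true_and, zero_ne_one, false_and, and_false,
    if_false, smul_eq_mul, mul_ite, mul_one, mul_zero, add_zero]
  split_ifs <;> ring

end

/-- For interior points `1 ≤ j ≤ N−2`,
`(⟨0|⊗⟨0|⊗⟨0|⊗I) U_d (|0⟩⊗|0⟩⊗|0⟩⊗e_j) = (1/4)(e_{j−1} − 2e_j + e_{j+1})`. -/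
theorem ud_interior_action (n : ℕ) (j : ℕ) (hj1 : 1 ≤ j) (hj2 : j ≤ 2 ^ n - 2) :
    (fun i : Fin (2 ^ n) =>
        Ud (2 ^ n) ((0 : Fin 2), (0 : Fin 2), (0 : Fin 2), i)
          ((0 : Fin 2), (0 : Fin 2), (0 : Fin 2), (⟨j, by omega⟩ : Fin (2 ^ n))))
      = (1 / 4 : ℂ) •
          (eVec (2 ^ n) ⟨j - 1, by omega⟩
            - (2 : ℂ) • eVec (2 ^ n) ⟨j, by omega⟩
            + eVec (2 ^ n) ⟨j + 1, by omega⟩) := by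
  set J : Fin (2 ^ n) := ⟨j, by omega⟩
  have h0 : J ≠ 0 := Fin.ne_of_val_ne (show j ≠ 0 by omega)
  have hL : J ≠ fLast (2 ^ n) := Fin.ne_of_val_ne (show j ≠ 2 ^ n - 1 by omega)
  have hprev : J - 1 = ⟨j - 1, by omega⟩ := Fin.ext (Fin.val_sub_one_of_ne_zero h0)
  have hnext : J + 1 = ⟨j + 1, by omega⟩ :=
    Fin.ext (Fin.val_add_one_of_lt' (show j + 1 < 2 ^ n by omega))
  rw [Ud_apply_interior h0 hL, hprev, hnext]
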